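/- arXiv:0904.3181 — 4 statements merged into one kernel-verified Lean document; each statement's English description precedes it below -/
import Mathlib

section
/- Let K be a field of characteristic 0. The Lie algebra L1 over K is generated by e_1 and e_2, its lower central series satisfies C^i L1 = span{e_j : j ≥ i + 1} for all i ≥ 2 (and C^1 L1 = L1), and consequently L1 is residually nilpotent of maximal class: dim(C^1 L1 / C^2 L1) = 2, dim(C^i L1 / C^{i+1} L1) = 1 for all i ≥ 2, and ∩_{i≥1} C^i L1 = 0. -/
/-- The quotient `C^i g / C^{i+1} g` of consecutive terms of the lower central series
(`C^1 g = g`, `C^{k+1} g = [g, C^k g]`, so `C^k g = LieModule.lowerCentralSeries K g g (k-1)`). -/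
abbrev lcsQuot (K g : Type*) [Field K] [LieRing g] [LieAlgebra K g] (i : ℕ) : Type _ :=
  ↥(LieSubmodule.toSubmodule (LieModule.lowerCentralSeries K g g (i - 1))) ⧸
    (Submodule.comap
      (LieSubmodule.toSubmodule (LieModule.lowerCentralSeries K g g (i - 1))).subtype
      (LieSubmodule.toSubmodule (LieModule.lowerCentralSeries K g g i)))

/-!
The bracket relations make `L1` graded with `e j` in degree `j`, so `C^{k+1}` lies in the span of
the `e j` with `j ≥ k + 2`: each bracket raises the degree by at least one, and for `k = 1` the only
bracket of total degree `2` is `⁅e 1, e 1⁆ = 0`. Conversely `⁅e 1, e n⁆ = (n - 1) • e (n + 1)`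
with `n - 1 ≠ 0` in characteristic zero for `n ≥ 2`, so every `e (n + 1)` is one more bracket with
`e 1` away from `e n`. This gives both the lower central series and generation by `e 1, e 2`;
the dimensions of the quotients and the trivial intersection are read off from coordinates.
-/

open Module

namespace Module.Basis

variable {ι R M : Type*} [CommRing R] [AddCommGroup M] [Module R M]

section Span

variable (e : Basis ι R M)

theorem iInf_span_image_eq_bot {κ : Type*} (s : κ → Set ι) (hs : ⋂ k, s k = ∅) :
    ⨅ k, Submodule.span R (e '' s k) = ⊥ := by
  refine eq_bot_iff.2 fun x hx => (Submodule.mem_bot R).2 ?_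
  have hsupp : ↑(e.repr x).support ⊆ ⋂ k, s k :=
    Set.subset_iInter fun k => e.mem_span_image.1 (Submodule.mem_iInf _ |>.1 hx k)
  rw [hs, Set.subset_empty_iff, Finset.coe_eq_empty, Finsupp.support_eq_empty] at hsupp
  simpa using hsupp

theorem finrank_quotient_span_image [Nontrivial R] (s t : Set ι) (d : Finset ι)
    (hd : ↑d = s \ t) :
    finrank R (Submodule.span R (e '' s) ⧸
      (Submodule.span R (e '' t)).comap (Submodule.span R (e '' s)).subtype) = d.card := by
  set S := Submodule.span R (e '' s)
  let ψ : S →ₗ[R] (d → R) := (LinearMap.pi fun j : d => e.coord j) ∘ₗ S.subtype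
  have hker : LinearMap.ker ψ = (Submodule.span R (e '' t)).comap S.subtype := by
    ext ⟨x, hx⟩
    rw [e.mem_span_image] at hx
    simp only [LinearMap.mem_ker, Submodule.mem_comap, Submodule.subtype_apply, e.mem_span_image]
    constructor
    · intro h j hj
      by_contra hjt
      have : (j : ι) ∈ (d : Set ι) := hd ▸ ⟨hx hj, hjt⟩
      exact (Finsupp.mem_support_iff.1 hj) (congrFun h ⟨j, this⟩)
    · intro h
      funext j
      by_contra hj
      exact (hd ▸ j.2 : (j : ι) ∈ s \ t).2 (h (Finsupp.mem_support_iff.2 hj))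
  have hsurj : Function.Surjective ψ := by
    intro v
    refine ⟨⟨∑ j : d, v j • e j, Submodule.sum_mem _ fun j _ =>
      Submodule.smul_mem _ _ (Submodule.subset_span ⟨j, (hd ▸ j.2 : (j : ι) ∈ s \ t).1, rfl⟩)⟩, ?_⟩
    funext k
    simp only [ψ, LinearMap.comp_apply, LinearMap.pi_apply, Submodule.subtype_apply,
      Basis.coord_apply, map_sum, map_smul, Basis.repr_self, smul_eq_mul]
    rw [Finset.sum_eq_single k (fun j _ hjk => by
      rw [Finsupp.single_eq_of_ne (Subtype.coe_injective.ne hjk.symm), mul_zero]) (by simp),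
      Finsupp.single_eq_same, mul_one]
  rw [← Submodule.quotEquivOfEq _ _ hker |>.finrank_eq,
    (ψ.quotKerEquivOfSurjective hsurj).finrank_eq, finrank_fintype_fun_eq_card,
    Fintype.card_coe]

end Span

section Tail

variable (e : Basis ℕ+ R M)

def tailSpan (n : ℕ) : Submodule R M := Submodule.span R (e '' {j | n ≤ (j : ℕ)})

theorem mem_tailSpan {n : ℕ} {j : ℕ+} (hj : n ≤ j) : e j ∈ e.tailSpan n :=
  Submodule.subset_span ⟨j, hj, rfl⟩

theorem tailSpan_zero : e.tailSpan 0 = ⊤ := by simp [tailSpan, e.span_eq]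

theorem iInf_tailSpan_add_eq_bot (m : ℕ) : ⨅ n, e.tailSpan (n + m) = ⊥ :=
  e.iInf_span_image_eq_bot _ <| Set.iInter_eq_empty_iff.2 fun j =>
    ⟨j + 1, by simp only [Set.mem_ofPred_eq, not_le]; omega⟩

end Tail

section Lie

variable {g : Type*} [LieRing g] [LieAlgebra R g] (e : Basis ι R g)

theorem lie_mem_of_forall_lie_basis {P : Submodule R g} {s : Set ι}
    (h : ∀ i, ∀ j ∈ s, ⁅e i, e j⁆ ∈ P) (x : g) {y : g} (hy : y ∈ Submodule.span R (e '' s)) :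
    ⁅x, y⁆ ∈ P := by
  have hx : x ∈ Submodule.span R (Set.range e) := e.span_eq ▸ Submodule.mem_top
  induction hy using Submodule.span_induction with
  | mem z hz =>
    obtain ⟨j, hj, rfl⟩ := hz
    induction hx using Submodule.span_induction with
    | mem w hw => obtain ⟨i, rfl⟩ := hw; exact h i j hj
    | zero => simp
    | add a b _ _ ha hb => simpa [add_lie] using P.add_mem ha hb
    | smul c a _ ha => simpa [smul_lie] using P.smul_mem c ha
  | zero => simp
  | add a b _ _ ha hb => simpa [lie_add] using P.add_mem ha hb
  | smul c a _ ha => simpa [lie_smul] using P.smul_mem c ha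

end Lie

end Module.Basis

section GradedBasis

variable {R g : Type*} [CommRing R] [LieRing g] [LieAlgebra R g] {e : Basis ℕ+ R g}
  (hgr : ∀ i j, ∃ c : R, ⁅e i, e j⁆ = c • e (i + j))
include hgr

theorem lie_mem_tailSpan {m n : ℕ} (hmn : m ≤ n + 1) (x : g) {y : g}
    (hy : y ∈ e.tailSpan n) :
    ⁅x, y⁆ ∈ e.tailSpan m := by
  refine e.lie_mem_of_forall_lie_basis (fun i j (hj : n ≤ j) => ?_) x hy
  obtain ⟨c, hc⟩ := hgr i j
  rw [hc]
  exact Submodule.smul_mem _ _ (e.mem_tailSpan (by have := i.pos; simp; omega))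

theorem lowerCentralSeries_le_tailSpan (k : ℕ) :
    LieSubmodule.toSubmodule (LieModule.lowerCentralSeries R g g (k + 1)) ≤
      e.tailSpan (k + 3) := by
  induction k with
  | zero =>
    rw [LieModule.lowerCentralSeries_succ, LieModule.lowerCentralSeries_zero,
      LieSubmodule.lieIdeal_oper_eq_linear_span', Submodule.span_le]
    rintro _ ⟨x, -, y, -, rfl⟩
    have hy : y ∈ Submodule.span R (e '' Set.univ) := by simp
    refine e.lie_mem_of_forall_lie_basis (fun i j _ => ?_) x hy
    obtain ⟨c, hc⟩ := hgr i j
    by_cases hij : 3 ≤ ((i + j : ℕ+) : ℕ)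
    · exact hc ▸ Submodule.smul_mem _ _ (e.mem_tailSpan hij)
    · obtain ⟨rfl, rfl⟩ : i = 1 ∧ j = 1 := by
        simp only [PNat.add_coe, not_le, ← PNat.coe_eq_one_iff] at hij ⊢
        have := i.pos; have := j.pos; omega
      simp
  | succ k ih =>
    rw [LieModule.lowerCentralSeries_succ, LieSubmodule.lieIdeal_oper_eq_linear_span',
      Submodule.span_le]
    rintro _ ⟨x, -, y, hy, rfl⟩
    exact lie_mem_tailSpan hgr le_rfl x (ih hy)

end GradedBasis

section L1

variable {K g : Type*} [Field K] [CharZero K] [LieRing g] [LieAlgebra K g] {e : Basis ℕ+ K g}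
  (hrel : ∀ i j : ℕ+, ⁅e i, e j⁆ = (((j : ℕ) : K) - ((i : ℕ) : K)) • e (i + j))
include hrel

theorem basis_add_one_eq_smul_lie {n : ℕ+} (hn : n ≠ 1) :
    e (n + 1) = (((n : ℕ) : K) - 1)⁻¹ • ⁅e 1, e n⁆ := by
  have hc : ((n : ℕ) : K) - 1 ≠ 0 := by
    rw [sub_ne_zero]; exact_mod_cast PNat.coe_eq_one_iff.not.2 hn
  rw [add_comm, hrel, PNat.one_coe, Nat.cast_one, smul_smul, inv_mul_cancel₀ hc, one_smul]

theorem lieSpan_basis_one_two_eq_top : LieSubalgebra.lieSpan K g {e 1, e 2} = ⊤ := by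
  set A := LieSubalgebra.lieSpan K g {e 1, e 2}
  have he1 : e 1 ∈ A := LieSubalgebra.subset_lieSpan (Set.mem_insert _ _)
  have hmem (n : ℕ+) : e n ∈ A := by
    induction n using PNat.recOn with
    | one => exact he1
    | succ n ih =>
      rcases eq_or_ne n 1 with rfl | hn
      · exact LieSubalgebra.subset_lieSpan (Set.mem_insert_of_mem _ rfl)
      · rw [basis_add_one_eq_smul_lie hrel hn]
        exact A.smul_mem _ (A.lie_mem he1 ih)
  refine eq_top_iff.2 fun x _ => ?_
  have hx : x ∈ Submodule.span K (Set.range e) := e.span_eq ▸ Submodule.mem_top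
  exact Submodule.span_le (p := A.toSubmodule).2 (Set.range_subset_iff.2 hmem) hx

theorem basis_mem_lowerCentralSeries (k : ℕ) {j : ℕ+} (hj : k + 2 ≤ (j : ℕ)) :
    e j ∈ LieModule.lowerCentralSeries K g g k := by
  induction k generalizing j with
  | zero => simp
  | succ k ih =>
    obtain ⟨j, rfl⟩ := PNat.exists_eq_succ_of_ne_one (n := j) (by rintro rfl; simp at hj)
    have hj' : k + 2 ≤ (j : ℕ) := by rw [PNat.add_coe, PNat.one_coe] at hj; omega
    have hj1 : j ≠ 1 := by rintro rfl; simp at hj'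
    rw [basis_add_one_eq_smul_lie hrel hj1, LieModule.lowerCentralSeries_succ]
    exact Submodule.smul_mem _ _ (LieSubmodule.lie_mem_lie (LieSubmodule.mem_top _) (ih hj'))

theorem toSubmodule_lowerCentralSeries_eq_tailSpan {k : ℕ} (hk : 1 ≤ k) :
    LieSubmodule.toSubmodule (LieModule.lowerCentralSeries K g g k) = e.tailSpan (k + 2) := by
  obtain ⟨k, rfl⟩ := Nat.exists_eq_add_of_le' hk
  refine le_antisymm (lowerCentralSeries_le_tailSpan (fun i j => ⟨_, hrel i j⟩) k) ?_
  rw [Basis.tailSpan, Submodule.span_le]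
  rintro _ ⟨j, hj, rfl⟩
  exact basis_mem_lowerCentralSeries hrel _ hj

end L1

/-- Let `K` be a field of characteristic 0.  The Lie algebra `L1` over `K`
— presented here as any Lie algebra `g` with a basis `e 1, e 2, …` satisfying
`⁅e i, e j⁆ = (j - i) • e (i+j)` — is generated by `e 1` and `e 2`, its lower central
series satisfies `C^1 L1 = L1` and `C^i L1 = span {e j : j ≥ i+1}` for all `i ≥ 2`, and
consequently `L1` is residually nilpotent of maximal class:
`dim (C^1 L1 / C^2 L1) = 2`, `dim (C^i L1 / C^{i+1} L1) = 1` for all `i ≥ 2`, and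
`∩_{i ≥ 1} C^i L1 = 0`. -/
theorem L1_maximal_class (K g : Type*) [Field K] [CharZero K]
    [LieRing g] [LieAlgebra K g]
    (e : Module.Basis ℕ+ K g)
    (hrel : ∀ i j : ℕ+, ⁅e i, e j⁆ = (((j : ℕ) : K) - ((i : ℕ) : K)) • e (i + j)) :
    LieSubalgebra.lieSpan K g {e 1, e 2} = ⊤ ∧
    LieModule.lowerCentralSeries K g g 0 = ⊤ ∧
    (∀ i : ℕ, 2 ≤ i →
      LieSubmodule.toSubmodule (LieModule.lowerCentralSeries K g g (i - 1)) =
        Submodule.span K {x : g | ∃ j : ℕ+, i + 1 ≤ (j : ℕ) ∧ x = e j}) ∧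
    Module.finrank K (lcsQuot K g 1) = 2 ∧
    (∀ i : ℕ, 2 ≤ i → Module.finrank K (lcsQuot K g i) = 1) ∧
    ((⨅ k : ℕ, LieModule.lowerCentralSeries K g g k) = ⊥) := by
  have hlcs {k : ℕ} (hk : 1 ≤ k) := toSubmodule_lowerCentralSeries_eq_tailSpan hrel hk
  refine ⟨lieSpan_basis_one_two_eq_top hrel, LieModule.lowerCentralSeries_zero K g g,
    fun i hi => ?_, ?_, fun i hi => ?_, ?_⟩
  · rw [hlcs (by omega), show i - 1 + 2 = i + 1 by omega, Basis.tailSpan]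
    congr 1
    ext x
    simp [eq_comm]
  · unfold lcsQuot
    rw [Nat.sub_self, LieModule.lowerCentralSeries_zero, LieSubmodule.top_toSubmodule,
      ← e.tailSpan_zero, hlcs le_rfl]
    exact e.finrank_quotient_span_image _ _ {1, 2} (by
      ext j
      simp only [Finset.coe_pair, Set.mem_insert_iff, Set.mem_singleton_iff, Set.mem_sdiff,
        Set.mem_ofPred_eq, ← PNat.coe_inj, PNat.val_ofNat]
      have := j.pos; omega)
  · unfold lcsQuot
    rw [hlcs (by omega : 1 ≤ i - 1), hlcs (by omega : 1 ≤ i)]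
    exact e.finrank_quotient_span_image _ _ {i.succPNat} (by
      ext j; simp [← PNat.coe_inj]; omega)
  · refine eq_bot_iff.2 fun x hx => ?_
    have : x ∈ ⨅ k, e.tailSpan (k + 3) := Submodule.mem_iInf _ |>.2 fun k =>
      hlcs (k := k + 1) le_add_self ▸ (LieSubmodule.mem_iInf _).1 hx (k + 1)
    rwa [e.iInf_tailSpan_add_eq_bot] at this
end

section
/- Let K be a field of characteristic 0 and let q ≥ 1 and 2 ≤ i_1 < i_2 < … < i_q be integers. Then the alternating (q+1)-linear form ω = ω(e^{i_1} ∧ … ∧ e^{i_q} ∧ e^{i_q+1}) := Σ_{l≥0} (−1)^l D_1^l(e^{i_1} ∧ … ∧ e^{i_q}) ∧ e^{i_q+1+l} on m0 (this sum is finite, since D_1 is locally nilpotent) is a cocycle with trivial coefficients: dω = 0, where (d f)(X_1, …, X_{q+2}) = Σ_{1≤a<b≤q+2} (−1)^{a+b−1} f([X_a, X_b], X_1, …, X̂_a, …, X̂_b, …, X_{q+2}). -/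
/-!
Because `⁅e 1, e i⁆ = e (i + 1)` are the only nonzero brackets, every coordinate functional
satisfies `d e^n = e^1 ∧ e^{n-1}`; hence on a wedge of coordinate functionals `d` acts as
`e^1 ∧ D`, where the derivation `D` lowers one index by one. For
`ω = Σ_c (-1)^|c| multinomial(c) e^{i - c} ∧ e^{i_q + 1 + |c|}`, lowering one of the first
`q + 1` indices of the `c`-summand gives the same wedge as lowering the last index of the
`(c + δ_a)`-summand, and by the Pascal recursion for multinomial coefficients these terms cancel.
Only wedges containing `e^1` twice (a first index lowered to `1`) or `e^{i_q}` twice (`c = 0`)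
remain, and they vanish.
-/

open Finset

noncomputable def coordE {K g : Type*} [Field K] [AddCommGroup g] [Module K g]
    (e : Module.Basis ℕ+ K g) (n : ℕ) : g →ₗ[K] K :=
  if h : 0 < n then e.coord ⟨n, h⟩ else 0

noncomputable def omegaForm {K g : Type*} [Field K] [AddCommGroup g] [Module K g]
    (e : Module.Basis ℕ+ K g) {q : ℕ} (i : Fin (q + 1) → ℕ+) :
    (Fin (q + 2) → g) → K :=
  fun X =>
    ∑ c ∈ Fintype.piFinset (fun a : Fin (q + 1) => Finset.range ((i a : ℕ) - 1)),
      (-1 : K) ^ (∑ a, c a) * (Nat.multinomial Finset.univ c : K) *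
        Matrix.det (Matrix.of fun a b : Fin (q + 2) =>
          coordE e
            (Fin.snoc (α := fun _ : Fin (q + 2) => ℕ) (fun t : Fin (q + 1) => (i t : ℕ) - c t)
              ((i (Fin.last q) : ℕ) + 1 + ∑ t, c t) a)
            (X b))

noncomputable def lieCochainDiffTriv {K g : Type*} [Field K] [LieRing g] [LieAlgebra K g]
    {m : ℕ} (f : (Fin (m + 1) → g) → K) : (Fin (m + 2) → g) → K :=
  fun X =>
    ∑ a : Fin (m + 2), ∑ b : Fin (m + 2),
      if hab : a < b then
        (-1 : K) ^ ((a : ℕ) + (b : ℕ) + 1) *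
          f (Fin.cons ⁅X a, X b⁆ (fun t : Fin m =>
            X (b.succAbove ((⟨(a : ℕ), by
                have h1 : (a : ℕ) < (b : ℕ) := hab
                have h2 : (b : ℕ) < m + 2 := b.isLt
                omega⟩ : Fin (m + 1)).succAbove t))))
      else 0

section Multinomial

open Nat

variable {α : Type*} [DecidableEq α]

theorem sub_single_add_single {c : α → ℕ} {a : α} (ha : c a ≠ 0) :
    c - Pi.single a 1 + Pi.single a 1 = c := by
  funext t
  by_cases ht : t = a
  · subst ht
    simp only [Pi.add_apply, Pi.sub_apply, Pi.single_eq_same]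
    omega
  · simp [ht]

theorem sum_sub_single_add_one [Fintype α] {c : α → ℕ} {a : α} (ha : c a ≠ 0) :
    ∑ t, (c - Pi.single a 1 : α → ℕ) t + 1 = ∑ t, c t := by
  conv_rhs => rw [← sub_single_add_single ha]
  simp [sum_add_distrib]

theorem Nat.multinomial_eq_sum_sub_single [Fintype α] {c : α → ℕ} (hc : c ≠ 0) :
    Nat.multinomial univ c = ∑ a with c a ≠ 0, Nat.multinomial univ (c - Pi.single a 1) := by
  have hsum : ∑ t, c t ≠ 0 := fun h =>
    hc (funext fun t => (sum_eq_zero_iff.mp h) t (mem_univ t))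
  have key : ∀ a, c a ≠ 0 →
      (∏ t, (c t)!) * Nat.multinomial univ (c - Pi.single a 1) = c a * (∑ t, c t - 1)! := by
    intro a ha
    set d := c - Pi.single a 1
    have hprod : ∏ t, (c t)! = c a * ∏ t, (d t)! := by
      calc ∏ t, (c t)! = ∏ t, ((if t = a then c a else 1) * (d t)!) := by
            refine prod_congr rfl fun t _ => ?_
            by_cases ht : t = a
            · subst ht
              simpa [d] using (Nat.mul_factorial_pred ha).symm
            · simp [d, ht]
        _ = c a * ∏ t, (d t)! := by rw [prod_mul_distrib, prod_ite_eq']; simp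
    rw [hprod, mul_assoc, Nat.multinomial_spec, ← sum_sub_single_add_one ha, Nat.add_sub_cancel]
  apply Nat.eq_of_mul_eq_mul_left (prod_pos fun t _ => Nat.factorial_pos (c t))
  rw [Nat.multinomial_spec, mul_sum, sum_congr rfl fun a ha => key a (mem_filter.mp ha).2,
    ← sum_mul, sum_filter_ne_zero, Nat.mul_factorial_pred hsum]

variable [Fintype α] (R : Type*) [CommRing R]

noncomputable def signedMultinomial (c : α → ℕ) : R :=
  (-1) ^ (∑ a, c a) * Nat.multinomial univ c

variable {R}

theorem sum_signedMultinomial_sub_single {c : α → ℕ} (hc : c ≠ 0) :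
    ∑ a with c a ≠ 0, signedMultinomial R (c - Pi.single a 1) = -signedMultinomial R c := by
  have hsign : ∀ a ∈ univ.filter (c · ≠ 0),
      signedMultinomial R (c - Pi.single a 1)
        = -(-1) ^ (∑ t, c t) * (Nat.multinomial univ (c - Pi.single a 1) : R) := by
    intro a ha
    rw [signedMultinomial, ← sum_sub_single_add_one (mem_filter.mp ha).2, pow_succ]
    ring
  rw [sum_congr rfl hsign, ← mul_sum, ← Nat.cast_sum, ← Nat.multinomial_eq_sum_sub_single hc,
    signedMultinomial, neg_mul]

theorem sum_piFinset_range_add_single {M : Type*} [AddCommMonoid M] (B : α → ℕ) (a : α)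
    (G : (α → ℕ) → M) (hG : ∀ c, c a = B a → G c = 0) :
    ∑ c ∈ Fintype.piFinset fun b => range (B b), G (c + Pi.single a 1)
      = ∑ c ∈ Fintype.piFinset (fun b => range (B b)) with c a ≠ 0, G c := by
  rw [← sum_filter_of_ne (p := fun c => c a + 1 ≠ B a)
    fun c _ h hc => h (hG _ (by simpa using hc))]
  refine sum_nbij' (· + Pi.single a 1) (· - Pi.single a 1) ?_ ?_ ?_ ?_ fun _ _ => rfl
  · intro c hc
    simp only [mem_filter, Fintype.mem_piFinset, mem_range] at hc ⊢
    refine ⟨fun b => ?_, by simp⟩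
    by_cases hb : b = a
    · have := hc.1 b
      subst hb; simp; omega
    · simpa [hb] using hc.1 b
  · intro c hc
    simp only [mem_filter, Fintype.mem_piFinset, mem_range] at hc ⊢
    refine ⟨fun b => ?_, ?_⟩
    · by_cases hb : b = a
      · have := hc.1 b
        subst hb; simp; omega
      · simpa [hb] using hc.1 b
    · have := hc.1 a
      simp; omega
  · intro c _
    simp
  · intro c hc
    exact sub_single_add_single (mem_filter.mp hc).2

theorem sum_signedMultinomial_mul_add_single_add_eq_zero (B : α → ℕ) (U : (α → ℕ) → R)
    (hU0 : U 0 = 0) (hUB : ∀ c a, c a = B a → U c = 0) :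
    ∑ c ∈ Fintype.piFinset fun b => range (B b),
      signedMultinomial R c * (∑ a, U (c + Pi.single a 1) + U c) = 0 := by
  set box := Fintype.piFinset fun b => range (B b)
  have hshift : ∀ a, ∑ c ∈ box, signedMultinomial R c * U (c + Pi.single a 1)
      = ∑ c ∈ box with c a ≠ 0, signedMultinomial R (c - Pi.single a 1) * U c := fun a => by
    rw [← sum_piFinset_range_add_single B a _ fun c h => by rw [hUB c a h, mul_zero]]
    simp only [add_tsub_cancel_right, box]
  calc ∑ c ∈ box, signedMultinomial R c * (∑ a, U (c + Pi.single a 1) + U c)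
      = ∑ c ∈ box, ((∑ a with c a ≠ 0, signedMultinomial R (c - Pi.single a 1)) * U c
          + signedMultinomial R c * U c) := by
        simp only [mul_add, mul_sum, sum_add_distrib]
        rw [sum_comm, sum_congr rfl fun a _ => hshift a]
        simp only [sum_filter, sum_mul, ite_mul, zero_mul]
        rw [sum_comm]
    _ = 0 := sum_eq_zero fun c _ => by
        rcases eq_or_ne c 0 with rfl | hc
        · rw [hU0, mul_zero, mul_zero, add_zero]
        · rw [sum_signedMultinomial_sub_single hc]
          ring

end Multinomial

section Wedge

variable {R M : Type*} [CommRing R] [AddCommGroup M] [Module R M] {n : ℕ}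

noncomputable def wedge (f : Fin n → Module.Dual R M) (X : Fin n → M) : R :=
  (Matrix.of fun a b => f a (X b)).det

theorem wedge_eq_sum_row (f : Fin (n + 1) → Module.Dual R M) (X : Fin (n + 1) → M)
    (a : Fin (n + 1)) :
    wedge f X = ∑ k : Fin (n + 1),
      (-1) ^ ((a : ℕ) + k) * f a (X k) * wedge (a.removeNth f) (k.removeNth X) :=
  Matrix.det_succ_row _ a

theorem wedge_eq_sum_col (f : Fin (n + 1) → Module.Dual R M) (X : Fin (n + 1) → M)
    (k : Fin (n + 1)) :
    wedge f X = ∑ t : Fin (n + 1),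
      (-1) ^ ((t : ℕ) + k) * f t (X k) * wedge (t.removeNth f) (k.removeNth X) :=
  Matrix.det_succ_column _ k

theorem wedge_eq_zero_of_eq (f : Fin n → Module.Dual R M) (X : Fin n → M) {a b : Fin n}
    (hab : a ≠ b) (h : f a = f b) : wedge f X = 0 :=
  Matrix.det_zero_of_row_eq hab (funext fun k => by simp [h])

theorem sum_wedge_update (f β : Fin (n + 1) → Module.Dual R M) (Y : Fin (n + 1) → M) :
    ∑ t, wedge (Function.update f t (β t)) Y
      = ∑ k : Fin (n + 1), ∑ t : Fin (n + 1),
          (-1) ^ ((t : ℕ) + k) * β t (Y k) * wedge (t.removeNth f) (k.removeNth Y) := by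
  rw [sum_comm]
  refine sum_congr rfl fun t _ => ?_
  rw [wedge_eq_sum_row _ _ t]
  simp

end Wedge

section Cochain

variable {K g : Type*} [Field K] [LieRing g] [LieAlgebra K g] {m : ℕ}

theorem lieCochainDiffTriv_sum {ι : Type*} (s : Finset ι) (w : ι → K)
    (F : ι → (Fin (m + 1) → g) → K) (X : Fin (m + 2) → g) :
    lieCochainDiffTriv (fun Y => ∑ c ∈ s, w c * F c Y) X
      = ∑ c ∈ s, w c * lieCochainDiffTriv (F c) X := by
  simp only [lieCochainDiffTriv, mul_sum, mul_dite, mul_zero]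
  rw [sum_comm (s := s)]
  refine sum_congr rfl fun a _ => ?_
  rw [sum_comm (s := s)]
  refine sum_congr rfl fun b _ => ?_
  split_ifs
  · exact sum_congr rfl fun c _ => mul_left_comm _ _ _
  · exact sum_const_zero.symm

theorem lieCochainDiffTriv_eq_sum_succAbove (F : (Fin (m + 1) → g) → K)
    (φ : g → g → (Fin m → g) → K)
    (hF : ∀ U V Y, F (Fin.cons ⁅U, V⁆ Y) = φ U V Y - φ V U Y)
    (X : Fin (m + 2) → g) :
    lieCochainDiffTriv F X = ∑ p : Fin (m + 2), ∑ k : Fin (m + 1),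
      (-1) ^ ((p : ℕ) + k) * φ (X p) (X (p.succAbove k)) (k.removeNth (p.removeNth X)) := by
  let rest : ∀ a b : Fin (m + 2), a < b → Fin m → g := fun a b h t =>
    X (b.succAbove ((⟨a, Fin.val_lt_last (Fin.ne_last_of_lt h)⟩ : Fin (m + 1)).succAbove t))
  -- the two terms of `lieCochainDiffTriv F X` in which `φ` is applied to `X p` and then `X s`
  let T : Fin (m + 2) → Fin (m + 2) → K := fun p s =>
    (if h : p < s then (-1) ^ ((p : ℕ) + s + 1) * φ (X p) (X s) (rest p s h) else 0) +
    (if h : s < p then (-1) ^ ((p : ℕ) + s) * φ (X p) (X s) (rest s p h) else 0)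
  have hsplit : lieCochainDiffTriv F X = ∑ p, ∑ s, T p s := by
    simp only [T, rest, sum_add_distrib]
    rw [sum_comm (f := fun p s => if h : s < p then _ else _), ← sum_add_distrib]
    refine sum_congr rfl fun a _ => ?_
    rw [← sum_add_distrib]
    refine sum_congr rfl fun b _ => ?_
    by_cases hab : a < b
    · simp only [dif_pos hab, hF]
      ring
    · simp only [dif_neg hab, add_zero]
  have hT : ∀ p k, T p (p.succAbove k)
      = (-1) ^ ((p : ℕ) + k) * φ (X p) (X (p.succAbove k)) (k.removeNth (p.removeNth X)) := by
    intro p k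
    rcases lt_or_ge k.castSucc p with h | h
    · rw [Fin.succAbove_of_castSucc_lt _ _ h]
      simp only [T, dif_neg (not_lt.mpr h.le), dif_pos h, Fin.val_castSucc, zero_add]
      rfl
    · have hlt : p < k.succ := Fin.castSucc_lt_succ_iff.mpr h
      have hrest : rest p k.succ hlt = k.removeNth (p.removeNth X) := funext fun t => by
        simp only [rest, Fin.removeNth]
        rw [← Fin.succAbove_succAbove_succAbove_predAbove p k t,
          Fin.predAbove_of_le_castSucc _ _ h, Fin.succAbove_of_le_castSucc _ _ h]
        rfl
      rw [Fin.succAbove_of_le_castSucc _ _ h]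
      simp only [T, dif_pos hlt, dif_neg (not_lt.mpr hlt.le), add_zero, Fin.val_succ, hrest]
      rw [show (p : ℕ) + (k + 1) + 1 = p + k + 2 by ring, pow_add, neg_one_sq, mul_one]
  rw [hsplit]
  refine sum_congr rfl fun p _ => ?_
  rw [Fin.sum_univ_succAbove _ p]
  simp only [T, lt_irrefl, dite_false, add_zero, zero_add]
  exact sum_congr rfl fun k _ => hT p k

theorem lieCochainDiffTriv_wedge (α : Module.Dual K g) (f β : Fin (m + 1) → Module.Dual K g)
    (hf : ∀ t U V, f t ⁅U, V⁆ = α U * β t V - β t U * α V) (X : Fin (m + 2) → g) :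
    lieCochainDiffTriv (wedge f) X = ∑ t, wedge (Fin.cons α (Function.update f t (β t))) X := by
  let Ψ : g → (Fin m → g) → K := fun V Y =>
    ∑ t : Fin (m + 1), (-1) ^ (t : ℕ) * β t V * wedge (t.removeNth f) Y
  have hcons : ∀ U V Y, wedge f (Fin.cons ⁅U, V⁆ Y) = α U * Ψ V Y - α V * Ψ U Y := by
    intro U V Y
    rw [wedge_eq_sum_col _ _ 0]
    simp only [Ψ, mul_sum, ← sum_sub_distrib]
    refine sum_congr rfl fun t _ => ?_
    simp only [Fin.cons_zero, Fin.removeNth_zero, Fin.tail_cons, Fin.val_zero, add_zero, hf]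
    ring
  have hrow : ∀ t, wedge (Fin.cons α (Function.update f t (β t))) X
      = ∑ p : Fin (m + 2),
          (-1) ^ (p : ℕ) * α (X p) * wedge (Function.update f t (β t)) (p.removeNth X) := by
    intro t
    rw [wedge_eq_sum_row _ _ 0]
    simp [Fin.removeNth_zero]
  rw [lieCochainDiffTriv_eq_sum_succAbove _ (fun U V Y => α U * Ψ V Y) hcons,
    sum_congr rfl fun t _ => hrow t]
  conv_rhs => rw [sum_comm]
  refine sum_congr rfl fun p _ => ?_
  rw [← mul_sum, sum_wedge_update, mul_sum]
  refine sum_congr rfl fun k _ => ?_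
  simp only [Ψ, mul_sum]
  refine sum_congr rfl fun t _ => ?_
  simp only [Fin.removeNth, pow_add]
  ring

end Cochain

section Filiform

variable {K g : Type*} [Field K] [LieRing g] [LieAlgebra K g] (e : Module.Basis ℕ+ K g)

theorem coordE_apply_basis (n : ℕ) (k : ℕ+) : coordE e n (e k) = if n = k then 1 else 0 := by
  rcases Nat.eq_zero_or_pos n with rfl | hn
  · simp [coordE, k.pos.ne]
  · lift n to ℕ+ using hn
    have hcoord : coordE e n = e.coord n := dif_pos n.pos
    simp [hcoord, Finsupp.single_apply, eq_comm]

theorem coordE_lie (hm0a : ∀ i : ℕ+, 2 ≤ i → ⁅e 1, e i⁆ = e (i + 1))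
    (hm0b : ∀ i j : ℕ+, 2 ≤ i → 2 ≤ j → ⁅e i, e j⁆ = 0) (n : ℕ) (U V : g) :
    coordE e n ⁅U, V⁆
      = coordE e 1 U * coordE e (n - 1) V - coordE e (n - 1) U * coordE e 1 V := by
  have hbasis : ∀ j k : ℕ+, coordE e n ⁅e j, e k⁆
      = coordE e 1 (e j) * coordE e (n - 1) (e k) - coordE e (n - 1) (e j) * coordE e 1 (e k) := by
    intro j k
    rcases (one_le : 1 ≤ j).eq_or_lt with rfl | hj <;>
      rcases (one_le : 1 ≤ k).eq_or_lt with rfl | hk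
    · rw [lie_self, map_zero]
      ring
    · rw [hm0a k hk]
      have hk' : 1 < (k : ℕ) := hk
      simp only [coordE_apply_basis, PNat.add_coe, PNat.one_coe]
      clear hm0a hm0b
      grind
    · rw [← lie_skew, hm0a j hj, map_neg]
      have hj' : 1 < (j : ℕ) := hj
      simp only [coordE_apply_basis, PNat.add_coe, PNat.one_coe]
      clear hm0a hm0b
      grind
    · rw [hm0b j k hj hk, map_zero]
      have hj' : 1 < (j : ℕ) := hj
      have hk' : 1 < (k : ℕ) := hk
      simp only [coordE_apply_basis]
      clear hm0a hm0b
      grind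
  let B₁ : g →ₗ[K] g →ₗ[K] K :=
    (LieModule.toEnd K g g : g →ₗ[K] Module.End K g).compr₂ (coordE e n)
  let B₂ : g →ₗ[K] g →ₗ[K] K :=
    (coordE e 1).smulRight (coordE e (n - 1)) - (coordE e (n - 1)).smulRight (coordE e 1)
  have hB : B₁ = B₂ := e.ext fun j => e.ext fun k => by simpa [B₁, B₂] using hbasis j k
  simpa [B₁, B₂] using LinearMap.congr_fun₂ hB U V

end Filiform

section OmegaIndex

variable {q : ℕ} (i : Fin (q + 1) → ℕ+) (c : Fin (q + 1) → ℕ)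

def omegaIndex (s : ℕ) : Fin (q + 2) → ℕ :=
  Fin.snoc (α := fun _ => ℕ) (fun t => (i t : ℕ) - c t)
    ((i (Fin.last q) : ℕ) + s + ∑ t, c t)

theorem update_omegaIndex_last :
    Function.update (omegaIndex i c 1) (Fin.last _) (omegaIndex i c 1 (Fin.last _) - 1)
      = omegaIndex i c 0 := by
  funext t
  refine Fin.lastCases ?_ (fun t => ?_) t
  · simp [omegaIndex]
  · simp [omegaIndex, (Fin.castSucc_lt_last t).ne]

theorem update_omegaIndex_castSucc (a : Fin (q + 1)) :
    Function.update (omegaIndex i c 1) a.castSucc (omegaIndex i c 1 a.castSucc - 1)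
      = omegaIndex i (c + Pi.single a 1) 0 := by
  funext t
  refine Fin.lastCases ?_ (fun t => ?_) t
  · simp [omegaIndex, (Fin.castSucc_lt_last a).ne', sum_add_distrib]
    omega
  · by_cases ht : t = a
    · subst ht
      simp [omegaIndex]
      omega
    · simp [omegaIndex, ht]

theorem omegaIndex_zero_castSucc_last :
    omegaIndex i 0 0 (Fin.last q).castSucc = omegaIndex i 0 0 (Fin.last (q + 1)) := by
  simp [omegaIndex]

theorem omegaIndex_castSucc_eq_one {a : Fin (q + 1)} (h : c a = (i a : ℕ) - 1) :
    omegaIndex i c 0 a.castSucc = 1 := by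
  simp only [omegaIndex, Fin.snoc_castSucc, h]
  have := (i a).pos
  omega

theorem omegaForm_eq_sum_wedge {K g : Type*} [Field K] [AddCommGroup g] [Module K g]
    (e : Module.Basis ℕ+ K g) :
    omegaForm e i = fun X => ∑ c ∈ Fintype.piFinset (fun a => range ((i a : ℕ) - 1)),
      signedMultinomial K c * wedge (coordE e ∘ omegaIndex i c 1) X :=
  rfl

end OmegaIndex

theorem omega_cocycle_trivial_coeffs_general (K g : Type*) [Field K]
    [LieRing g] [LieAlgebra K g]
    (e : Module.Basis ℕ+ K g)
    (hm0a : ∀ i : ℕ+, 2 ≤ i → ⁅e 1, e i⁆ = e (i + 1))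
    (hm0b : ∀ i j : ℕ+, 2 ≤ i → 2 ≤ j → ⁅e i, e j⁆ = 0)
    (q' : ℕ) (i : Fin (q' + 1) → ℕ+) :
    ∀ X : Fin (q' + 3) → g, lieCochainDiffTriv (omegaForm e i) X = 0 := by
  intro X
  let U : (Fin (q' + 1) → ℕ) → K := fun c =>
    wedge (Fin.cons (coordE e 1) (coordE e ∘ omegaIndex i c 0)) X
  have hdω : ∀ c, lieCochainDiffTriv (wedge (coordE e ∘ omegaIndex i c 1)) X
      = ∑ a, U (c + Pi.single a 1) + U c := by
    intro c
    rw [lieCochainDiffTriv_wedge (coordE e 1) (coordE e ∘ omegaIndex i c 1)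
      (fun t => coordE e (omegaIndex i c 1 t - 1))
      (fun t => coordE_lie e hm0a hm0b _) X, Fin.sum_univ_castSucc]
    simp only [← Function.comp_update, update_omegaIndex_castSucc, update_omegaIndex_last, U]
  have hU0 : U 0 = 0 :=
    wedge_eq_zero_of_eq _ X (Fin.succ_injective _ |>.ne (Fin.castSucc_lt_last (Fin.last q')).ne)
      (by simp [omegaIndex_zero_castSucc_last])
  have hUB : ∀ c a, c a = (i a : ℕ) - 1 → U c = 0 := fun c a h =>
    wedge_eq_zero_of_eq _ X (Fin.succ_ne_zero a.castSucc).symm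
      (by simp [omegaIndex_castSucc_eq_one i c h])
  rw [omegaForm_eq_sum_wedge, lieCochainDiffTriv_sum]
  simp only [hdω]
  exact sum_signedMultinomial_mul_add_single_add_eq_zero _ U hU0 hUB

/-- Let `K` be a field of characteristic 0 and let `q ≥ 1` and
`2 ≤ i_1 < i_2 < … < i_q` be integers (here the `q` indices are `i 0, …, i (Fin.last q')`
with `q = q' + 1 ≥ 1`).  Then the alternating `(q+1)`-linear form
`ω = ω(e^{i_1} ∧ … ∧ e^{i_q} ∧ e^{i_q + 1}) = Σ_{l ≥ 0} (-1)^l D₁^l(e^{i_1} ∧ … ∧ e^{i_q}) ∧ e^{i_q+1+l}`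
on `m0` (the Lie algebra with basis `e 1, e 2, …` and only nonzero brackets
`⁅e 1, e i⁆ = e (i+1)`, `i ≥ 2`) is a cocycle with trivial coefficients: `dω = 0`. -/
theorem omega_cocycle_trivial_coeffs (K g : Type*) [Field K] [CharZero K]
    [LieRing g] [LieAlgebra K g]
    (e : Module.Basis ℕ+ K g)
    (hm0a : ∀ i : ℕ+, 2 ≤ i → ⁅e 1, e i⁆ = e (i + 1))
    (hm0b : ∀ i j : ℕ+, 2 ≤ i → 2 ≤ j → ⁅e i, e j⁆ = 0)
    (q' : ℕ) (i : Fin (q' + 1) → ℕ+) (h2 : 2 ≤ i 0) (hmono : StrictMono i) :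
    ∀ X : Fin (q' + 3) → g, lieCochainDiffTriv (omegaForm e i) X = 0 :=
  omega_cocycle_trivial_coeffs_general K g e hm0a hm0b q' i
end

section
/- Let K be a field of characteristic 0, and let j ≥ 2 and s ≥ 0 be integers. The alternating bilinear map Ψ_{j,s} : m0 × m0 → m0 defined on basis vectors by Ψ_{j,s}(e_k, e_m) = (−1)^{j−k} binom(m−j−1, j−k) e_{k+m+s} whenever 2 ≤ k ≤ j < m and k + m ≥ 2j + 1, and Ψ_{j,s}(e_k, e_m) = 0 for all other pairs k < m (in particular Ψ_{j,s}(e_1, x) = 0 for all x), is a 2-cocycle of m0 with coefficients in the adjoint representation: dΨ_{j,s} = 0. Moreover Ψ_{j,s}(e_j, e_{j+1}) = e_{2j+1+s} and Ψ_{j,s}(e_k, e_{k+1}) = 0 for all k ≥ 2 with k ≠ j. -/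
/-- The basis vector `e n`, extended by `0` to the junk index `n = 0`. -/
noncomputable def E {K g : Type*} [Field K] [AddCommGroup g] [Module K g]
    (e : Module.Basis ℕ+ K g) (n : ℕ) : g :=
  if h : 0 < n then e ⟨n, h⟩ else 0

/-- The value of the cocycle `Ψ_{j,s}` on the pair of basis vectors `(e k, e m)`:
`Ψ_{j,s}(e_k, e_m) = (-1)^{j-k} C(m-j-1, j-k) e_{k+m+s}` for `2 ≤ k ≤ j < m` with
`k + m ≥ 2j + 1`, extended antisymmetrically, and `0` on all other pairs. -/
noncomputable def psiVal {K g : Type*} [Field K] [AddCommGroup g] [Module K g]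
    (e : Module.Basis ℕ+ K g) (j s : ℕ) (k m : ℕ+) : g :=
  if 2 ≤ (k : ℕ) ∧ (k : ℕ) ≤ j ∧ j < (m : ℕ) ∧ 2 * j + 1 ≤ (k : ℕ) + (m : ℕ) then
    ((-1 : K) ^ (j - (k : ℕ)) * (((m : ℕ) - j - 1).choose (j - (k : ℕ)) : K)) •
      E e ((k : ℕ) + (m : ℕ) + s)
  else if 2 ≤ (m : ℕ) ∧ (m : ℕ) ≤ j ∧ j < (k : ℕ) ∧ 2 * j + 1 ≤ (k : ℕ) + (m : ℕ) then
    -(((-1 : K) ^ (j - (m : ℕ)) * (((k : ℕ) - j - 1).choose (j - (m : ℕ)) : K)) •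
      E e ((k : ℕ) + (m : ℕ) + s))
  else 0

/-- The bilinear map `Ψ_{j,s} : g × g → g`, extended from its values `psiVal` on pairs of
basis vectors. -/
noncomputable def Psi {K g : Type*} [Field K] [AddCommGroup g] [Module K g]
    (e : Module.Basis ℕ+ K g) (j s : ℕ) : g →ₗ[K] g →ₗ[K] g :=
  Module.Basis.constr e K fun k => Module.Basis.constr e K fun m => psiVal e j s k m

/-!
`Ψ = Ψ_{j,s}` is alternating, being `A - Aᵀ` for its strictly upper triangular part `A`; hence
`dΨ` is alternating too, and it suffices to check `dΨ = 0` on basis triples, with `e₁` in front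
if it occurs. The vectors `e_n`, `n ≥ 2`, span an abelian ideal containing all values of `Ψ`, so
on a triple without `e₁` every term of `dΨ` vanishes. On `(e₁, e_b, e_c)` with `b, c ≥ 2`, as
`Ψ(e₁, ·) = 0`, only `⁅e₁, Ψ(e_b, e_c)⁆ - Ψ(e_{b+1}, e_c) - Ψ(e_b, e_{c+1})` survives; since
`ad e₁` raises indices by one, its vanishing is Pascal's rule for the coefficients
`(-1)^{j-b} C(c-j-1, j-b)`.
-/

theorem Module.Basis.apply_self_eq_zero_of_antisymm {R M N ι : Type*} [CommSemiring R]
    [AddCommMonoid M] [Module R M] [AddCommGroup N] [Module R N] [LinearOrder ι]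
    (b : Module.Basis ι R M) {B : M →ₗ[R] M →ₗ[R] N} (hB_self : ∀ i, B (b i) (b i) = 0)
    (hB_swap : ∀ i k, i < k → B (b k) (b i) = -B (b i) (b k)) (x : M) : B x x = 0 := by
  let A : M →ₗ[R] M →ₗ[R] N :=
    b.constr R fun i => b.constr R fun k => if i < k then B (b i) (b k) else 0
  have hB : B = A - A.flip := b.ext fun i => b.ext fun k => by
    simp only [A, LinearMap.sub_apply, LinearMap.flip_apply, Module.Basis.constr_basis]
    rcases lt_trichotomy i k with h | rfl | h
    · simp [h, h.not_gt]
    · simp [hB_self]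
    · simp [h, h.not_gt, hB_swap k i h]
  simp [hB]

namespace LieModule.Cohomology

variable {R L M : Type*} [CommRing R] [LieRing L] [LieAlgebra R L] [AddCommGroup M] [Module R M]
  [LieRingModule L M] [LieModule R L M] (a : twoCochain R L M) (x y z : L)

lemma d₂₃_apply_swap_left : d₂₃ R L M a y x z = -d₂₃ R L M a x y z := by
  simp only [d₂₃_apply, ← twoCochain_skew a y x, ← lie_skew x y, map_neg, LinearMap.neg_apply,
    lie_neg]
  abel

lemma d₂₃_apply_swap_right : d₂₃ R L M a x z y = -d₂₃ R L M a x y z := by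
  simp only [d₂₃_apply, ← twoCochain_skew a z y, ← lie_skew y z, map_neg, LinearMap.neg_apply,
    lie_neg]
  abel

lemma d₂₃_apply_self_left : d₂₃ R L M a x x z = 0 := by
  simp

end LieModule.Cohomology

/-- The coefficient of `Ψ_{j,s}(e_k, e_m)` for `k ≤ m`. The condition `k + m ≥ 2j + 1` of `psiVal`
is omitted: when it fails, the binomial coefficient vanishes. -/
noncomputable def psiCoeff (R : Type*) [CommRing R] (j k m : ℕ) : R :=
  if 2 ≤ k ∧ k ≤ j ∧ j < m then (-1) ^ (j - k) * ((m - j - 1).choose (j - k) : R) else 0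

lemma psiCoeff_self_succ {R : Type*} [CommRing R] {j : ℕ} (hj : 2 ≤ j) :
    psiCoeff R j j (j + 1) = 1 := by
  simp [psiCoeff, hj]

lemma psiCoeff_succ_of_ne {R : Type*} [CommRing R] {j k : ℕ} (hkj : k ≠ j) :
    psiCoeff R j k (k + 1) = 0 := by
  rw [psiCoeff, if_neg (by omega)]

lemma psiCoeff_eq_add {R : Type*} [CommRing R] (j : ℕ) {b c : ℕ} (hb : 2 ≤ b) (hbc : b < c) :
    psiCoeff R j b c = psiCoeff R j (b + 1) c + psiCoeff R j b (c + 1) := by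
  unfold psiCoeff
  rcases lt_trichotomy b j with hbj | rfl | hjb
  · by_cases hjc : j < c
    · obtain ⟨p, hp⟩ : ∃ p, j - b = p + 1 := ⟨j - b - 1, by omega⟩
      rw [if_pos ⟨hb, hbj.le, hjc⟩, if_pos ⟨by omega, hbj, hjc⟩, if_pos ⟨hb, hbj.le, by omega⟩,
        hp, show j - (b + 1) = p by omega, show c + 1 - j - 1 = c - j - 1 + 1 by omega,
        Nat.choose_succ_succ']
      push_cast
      ring
    · rw [if_neg (by omega), if_neg (by omega)]
      by_cases hcj : c = j
      · rw [if_pos ⟨hb, hbj.le, by omega⟩, Nat.choose_eq_zero_of_lt (by omega)]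
        simp
      · rw [if_neg (by omega)]
        simp
  · rw [if_pos ⟨hb, le_rfl, hbc⟩, if_neg (by omega), if_pos ⟨hb, le_rfl, by omega⟩]
    simp
  · rw [if_neg (by omega), if_neg (by omega), if_neg (by omega), add_zero]

section psiVal

variable {K g : Type*} [Field K] [AddCommGroup g] [Module K g] (e : Module.Basis ℕ+ K g) (j s : ℕ)

lemma E_coe (n : ℕ+) : E e n = e n := dif_pos n.pos

lemma psiVal_of_le {k m : ℕ+} (hkm : (k : ℕ) ≤ m) :
    psiVal e j s k m = psiCoeff K j k m • E e (k + m + s) := by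
  unfold psiVal psiCoeff
  by_cases h : 2 ≤ (k : ℕ) ∧ (k : ℕ) ≤ j ∧ j < (m : ℕ)
  · by_cases hkm' : 2 * j + 1 ≤ (k : ℕ) + m
    · rw [if_pos ⟨h.1, h.2.1, h.2.2, hkm'⟩, if_pos h]
    · rw [if_neg (by omega), if_neg (by omega), if_pos h, Nat.choose_eq_zero_of_lt (by omega)]
      simp
  · rw [if_neg (by omega), if_neg (by omega), if_neg h, zero_smul]

lemma psiVal_swap (k m : ℕ+) : psiVal e j s m k = -psiVal e j s k m := by
  unfold psiVal
  rw [add_comm (m : ℕ)]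
  split_ifs <;> first | omega | simp

lemma exists_psiVal_eq_smul (k m : ℕ+) : ∃ c : K, psiVal e j s k m = c • E e (k + m + s) := by
  rcases le_total (k : ℕ) m with hkm | hmk
  · exact ⟨_, psiVal_of_le e j s hkm⟩
  · refine ⟨-psiCoeff K j m k, ?_⟩
    rw [psiVal_swap e j s m k, psiVal_of_le e j s hmk, add_comm (m : ℕ), neg_smul]

lemma psiVal_one (m : ℕ+) : psiVal e j s 1 m = 0 := by
  rw [psiVal_of_le e j s (PNat.one_coe ▸ m.pos), psiCoeff, if_neg (by simp), zero_smul]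

lemma Psi_basis (k m : ℕ+) : Psi e j s (e k) (e m) = psiVal e j s k m := by
  rw [Psi, Module.Basis.constr_basis, Module.Basis.constr_basis]

lemma Psi_apply_swap (x y : g) : Psi e j s y x = -Psi e j s x y := by
  have hflip : (Psi e j s).flip = -Psi e j s := e.ext fun k => e.ext fun m => by
    rw [LinearMap.flip_apply, LinearMap.neg_apply, LinearMap.neg_apply, Psi_basis, Psi_basis,
      psiVal_swap]
  rw [← LinearMap.flip_apply (Psi e j s), hflip, LinearMap.neg_apply, LinearMap.neg_apply]

lemma Psi_apply_self (x : g) : Psi e j s x x = 0 :=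
  e.apply_self_eq_zero_of_antisymm (fun k => by
    rw [Psi_basis, psiVal_of_le e j s le_rfl, psiCoeff, if_neg (by omega), zero_smul])
    (fun k m _ => Psi_apply_swap e j s _ _) x

lemma Psi_e_one : Psi e j s (e 1) = 0 :=
  e.ext fun m => by rw [Psi_basis, psiVal_one e j s, LinearMap.zero_apply]

lemma Psi_E_E {k m : ℕ} (hk : 0 < k) (hkm : k ≤ m) :
    Psi e j s (E e k) (E e m) = psiCoeff K j k m • E e (k + m + s) := by
  lift m to ℕ+ using hk.trans_le hkm
  lift k to ℕ+ using hk
  rw [E_coe, E_coe, Psi_basis, psiVal_of_le e j s hkm]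

end psiVal

lemma PNat.two_le_of_ne_one {n : ℕ+} (hn : n ≠ 1) : 2 ≤ n :=
  PNat.add_one_le_iff.mpr (lt_of_le_of_ne one_le hn.symm)

section m0

open LieModule.Cohomology

variable {K g : Type*} [Field K] [LieRing g] [LieAlgebra K g] (e : Module.Basis ℕ+ K g) (j s : ℕ)

lemma lie_e_one_E (hm0a : ∀ i : ℕ+, 2 ≤ i → ⁅e 1, e i⁆ = e (i + 1)) {n : ℕ} (hn : 2 ≤ n) :
    ⁅e 1, E e n⁆ = E e (n + 1) := by
  lift n to ℕ+ using by omega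
  rw [E_coe, ← PNat.one_coe, ← PNat.add_coe, E_coe, hm0a n (by exact_mod_cast hn)]

lemma lie_E_eq_zero (hm0b : ∀ i j : ℕ+, 2 ≤ i → 2 ≤ j → ⁅e i, e j⁆ = 0) {a : ℕ+} (ha : 2 ≤ a)
    {n : ℕ} (hn : 2 ≤ n) : ⁅e a, E e n⁆ = 0 := by
  lift n to ℕ+ using by omega
  rw [E_coe, hm0b a n ha (by exact_mod_cast hn)]

lemma lie_psiVal_eq_zero (hm0b : ∀ i j : ℕ+, 2 ≤ i → 2 ≤ j → ⁅e i, e j⁆ = 0) {a : ℕ+}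
    (ha : 2 ≤ a) (k m : ℕ+) : ⁅e a, psiVal e j s k m⁆ = 0 := by
  obtain ⟨c, hc⟩ := exists_psiVal_eq_smul e j s k m
  rw [hc, lie_smul, lie_E_eq_zero e hm0b ha (by have := k.pos; have := m.pos; omega), smul_zero]

lemma lie_e_one_psiVal_of_lt (hm0a : ∀ i : ℕ+, 2 ≤ i → ⁅e 1, e i⁆ = e (i + 1)) {b c : ℕ+}
    (hb : 2 ≤ (b : ℕ)) (hbc : (b : ℕ) < c) :
    ⁅e 1, psiVal e j s b c⁆ = psiVal e j s (b + 1) c + psiVal e j s b (c + 1) := by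
  rw [psiVal_of_le e j s hbc.le, psiVal_of_le e j s (by simpa using hbc),
    psiVal_of_le e j s (by simp; omega), PNat.add_coe, PNat.add_coe, PNat.one_coe,
    lie_smul, lie_e_one_E e hm0a (by omega), add_right_comm (b : ℕ) 1, ← add_assoc (b : ℕ),
    ← add_smul, ← psiCoeff_eq_add j hb hbc, add_right_comm _ 1]

lemma lie_e_one_psiVal (hm0a : ∀ i : ℕ+, 2 ≤ i → ⁅e 1, e i⁆ = e (i + 1)) {b c : ℕ+}
    (hb : 2 ≤ b) (hc : 2 ≤ c) :
    ⁅e 1, psiVal e j s b c⁆ = psiVal e j s (b + 1) c + psiVal e j s b (c + 1) := by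
  replace hb : 2 ≤ (b : ℕ) := by exact_mod_cast hb
  replace hc : 2 ≤ (c : ℕ) := by exact_mod_cast hc
  rcases lt_trichotomy (b : ℕ) c with hbc | hbc | hcb
  · exact lie_e_one_psiVal_of_lt e j s hm0a hb hbc
  · obtain rfl := PNat.coe_injective hbc
    rw [psiVal_swap e j s b (b + 1), psiVal_of_le e j s le_rfl, psiCoeff, if_neg (by omega),
      zero_smul, lie_zero, neg_add_cancel]
  · rw [psiVal_swap e j s c b, lie_neg, lie_e_one_psiVal_of_lt e j s hm0a hc hcb,
      psiVal_swap e j s b (c + 1), psiVal_swap e j s (b + 1) c]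
    abel

noncomputable def psiTwoCochain : twoCochain K g g := ⟨Psi e j s, Psi_apply_self e j s⟩

@[simp]
lemma psiTwoCochain_apply (x y : g) : psiTwoCochain e j s x y = Psi e j s x y := rfl

lemma d₂₃_psiTwoCochain_e_one (hm0a : ∀ i : ℕ+, 2 ≤ i → ⁅e 1, e i⁆ = e (i + 1))
    (hm0b : ∀ i j : ℕ+, 2 ≤ i → 2 ≤ j → ⁅e i, e j⁆ = 0) (b c : ℕ+) :
    d₂₃ K g g (psiTwoCochain e j s) (e 1) (e b) (e c) = 0 := by
  rcases eq_or_ne b 1 with rfl | hb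
  · exact d₂₃_apply_self_left _ _ _
  rcases eq_or_ne c 1 with rfl | hc
  · rw [d₂₃_apply_swap_right, d₂₃_apply_self_left, neg_zero]
  replace hb := PNat.two_le_of_ne_one hb
  replace hc := PNat.two_le_of_ne_one hc
  simp only [d₂₃_apply, psiTwoCochain_apply, hm0a b hb, hm0a c hc, hm0b b c hb hc, Psi_e_one,
    map_zero, LinearMap.zero_apply, lie_zero, Psi_basis, lie_e_one_psiVal e j s hm0a hb hc,
    psiVal_swap e j s b (c + 1)]
  abel

lemma d₂₃_psiTwoCochain_of_two_le (hm0b : ∀ i j : ℕ+, 2 ≤ i → 2 ≤ j → ⁅e i, e j⁆ = 0)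
    {a b c : ℕ+} (ha : 2 ≤ a) (hb : 2 ≤ b) (hc : 2 ≤ c) :
    d₂₃ K g g (psiTwoCochain e j s) (e a) (e b) (e c) = 0 := by
  simp only [d₂₃_apply, psiTwoCochain_apply, hm0b _ _ ha hb, hm0b _ _ ha hc, hm0b _ _ hb hc,
    map_zero, LinearMap.zero_apply, Psi_basis, lie_psiVal_eq_zero e j s hm0b ha,
    lie_psiVal_eq_zero e j s hm0b hb, lie_psiVal_eq_zero e j s hm0b hc]
  simp

theorem d₂₃_psiTwoCochain (hm0a : ∀ i : ℕ+, 2 ≤ i → ⁅e 1, e i⁆ = e (i + 1))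
    (hm0b : ∀ i j : ℕ+, 2 ≤ i → 2 ≤ j → ⁅e i, e j⁆ = 0) :
    d₂₃ K g g (psiTwoCochain e j s) = 0 := by
  refine e.ext fun a => e.ext fun b => e.ext fun c => ?_
  rw [LinearMap.zero_apply, LinearMap.zero_apply, LinearMap.zero_apply]
  rcases eq_or_ne a 1 with rfl | ha
  · exact d₂₃_psiTwoCochain_e_one e j s hm0a hm0b b c
  rcases eq_or_ne b 1 with rfl | hb
  · rw [d₂₃_apply_swap_left, d₂₃_psiTwoCochain_e_one e j s hm0a hm0b, neg_zero]
  rcases eq_or_ne c 1 with rfl | hc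
  · rw [d₂₃_apply_swap_right, d₂₃_apply_swap_left, d₂₃_psiTwoCochain_e_one e j s hm0a hm0b,
      neg_zero, neg_zero]
  exact d₂₃_psiTwoCochain_of_two_le e j s hm0b (PNat.two_le_of_ne_one ha)
    (PNat.two_le_of_ne_one hb) (PNat.two_le_of_ne_one hc)

end m0

theorem psi_js_is_two_cocycle_general (K g : Type*) [Field K]
    [LieRing g] [LieAlgebra K g]
    (e : Module.Basis ℕ+ K g)
    (hm0a : ∀ i : ℕ+, 2 ≤ i → ⁅e 1, e i⁆ = e (i + 1))
    (hm0b : ∀ i j : ℕ+, 2 ≤ i → 2 ≤ j → ⁅e i, e j⁆ = 0)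
    (j s : ℕ) (hj : 2 ≤ j) :
    (∀ x y : g, Psi e j s x y = -Psi e j s y x) ∧
    (∀ x : g, Psi e j s (e 1) x = 0) ∧
    (∀ x y z : g,
      ⁅x, Psi e j s y z⁆ - ⁅y, Psi e j s x z⁆ + ⁅z, Psi e j s x y⁆
        - Psi e j s ⁅x, y⁆ z + Psi e j s ⁅x, z⁆ y - Psi e j s ⁅y, z⁆ x = 0) ∧
    Psi e j s (E e j) (E e (j + 1)) = E e (2 * j + 1 + s) ∧
    (∀ k : ℕ, 2 ≤ k → k ≠ j → Psi e j s (E e k) (E e (k + 1)) = 0) := by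
  refine ⟨fun x y => Psi_apply_swap e j s y x, fun x => by rw [Psi_e_one]; rfl,
    fun x y z => ?_, ?_, fun k hk hkj => ?_⟩
  · simpa using congr($(d₂₃_psiTwoCochain e j s hm0a hm0b) x y z)
  · rw [Psi_E_E e j s (by omega) (by omega), psiCoeff_self_succ hj, one_smul]
    congr 1
    ring
  · rw [Psi_E_E e j s (by omega) (by omega), psiCoeff_succ_of_ne hkj, zero_smul]

/-- Let `K` be a field of characteristic 0 and `j ≥ 2`, `s ≥ 0` integers.
On `m0` (a Lie algebra with basis `e 1, e 2, …` and only nonzero brackets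
`⁅e 1, e i⁆ = e (i+1)`, `i ≥ 2`), the alternating bilinear map `Ψ_{j,s}` defined on basis
vectors by `Ψ_{j,s}(e_k, e_m) = (-1)^{j-k} C(m-j-1, j-k) e_{k+m+s}` for
`2 ≤ k ≤ j < m`, `k + m ≥ 2j + 1`, and `0` on all other pairs `k < m` (in particular
`Ψ_{j,s}(e_1, x) = 0` for all `x`), is a 2-cocycle with coefficients in the adjoint
representation: `dΨ_{j,s} = 0`.  Moreover `Ψ_{j,s}(e_j, e_{j+1}) = e_{2j+1+s}` and
`Ψ_{j,s}(e_k, e_{k+1}) = 0` for all `k ≥ 2`, `k ≠ j`. -/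
theorem psi_js_is_two_cocycle (K g : Type*) [Field K] [CharZero K]
    [LieRing g] [LieAlgebra K g]
    (e : Module.Basis ℕ+ K g)
    (hm0a : ∀ i : ℕ+, 2 ≤ i → ⁅e 1, e i⁆ = e (i + 1))
    (hm0b : ∀ i j : ℕ+, 2 ≤ i → 2 ≤ j → ⁅e i, e j⁆ = 0)
    (j s : ℕ) (hj : 2 ≤ j) :
    (∀ x y : g, Psi e j s x y = -Psi e j s y x) ∧
    (∀ x : g, Psi e j s (e 1) x = 0) ∧
    (∀ x y z : g,
      ⁅x, Psi e j s y z⁆ - ⁅y, Psi e j s x z⁆ + ⁅z, Psi e j s x y⁆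
        - Psi e j s ⁅x, y⁆ z + Psi e j s ⁅x, z⁆ y - Psi e j s ⁅y, z⁆ x = 0) ∧
    Psi e j s (E e j) (E e (j + 1)) = E e (2 * j + 1 + s) ∧
    (∀ k : ℕ, 2 ≤ k → k ≠ j → Psi e j s (E e k) (E e (k + 1)) = 0) :=
  psi_js_is_two_cocycle_general K g e hm0a hm0b j s hj
end

section
/- Let K be a field of characteristic 0, let V be the K-vector space with basis e_1, e_2, …, and let Ψ = Ψ_0 + Ψ_1 + Ψ_2 + … be an alternating bilinear map V × V → V with Ψ(e_1, x) = 0 for all x, where each homogeneous component Ψ_i satisfies Ψ_i(e_a, e_b) ∈ span{e_{a+b+i}} for a, b ≥ 2, and suppose the bracket [x, y]_Ψ = [x, y]_{m0} + Ψ(x, y) satisfies the Jacobi identity. Then for any nonzero scalars α, β ∈ K, the bracket [x, y]_{Ψ̃} = [x, y]_{m0} + Ψ̃(x, y) with Ψ̃ = β Ψ_0 + βα Ψ_1 + βα² Ψ_2 + … + βα^i Ψ_i + … also satisfies the Jacobi identity, and the two resulting Lie algebras (V, [,]_Ψ) and (V, [,]_{Ψ̃}) are isomorphic. -/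
open Module Function

namespace LinearMap

section Finsum

variable {ι R M N P : Type*} [CommSemiring R] [AddCommMonoid M] [AddCommMonoid N]
  [AddCommMonoid P] [Module R M] [Module R N] [Module R P]

noncomputable def finsum₂ (B : ι → M →ₗ[R] N →ₗ[R] P)
    (hB : ∀ x y, HasFiniteSupport fun i => B i x y) : M →ₗ[R] N →ₗ[R] P :=
  mk₂ R (fun x y => ∑ᶠ i, B i x y)
    (fun x x' y => by simp only [map_add, add_apply]; exact finsum_add_distrib (hB x y) (hB x' y))
    (fun c x y => by simp only [map_smul, smul_apply]; exact (smul_finsum' c (hB x y)).symm)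
    (fun x y y' => by simp only [map_add]; exact finsum_add_distrib (hB x y) (hB x y'))
    (fun c x y => by simp only [map_smul]; exact (smul_finsum' c (hB x y)).symm)

@[simp]
theorem finsum₂_apply (B : ι → M →ₗ[R] N →ₗ[R] P)
    (hB : ∀ x y, HasFiniteSupport fun i => B i x y) (x : M) (y : N) :
    finsum₂ B hB x y = ∑ᶠ i, B i x y :=
  rfl

theorem isAlt_finsum₂ {B : ι → M →ₗ[R] M →ₗ[R] P} (hB : ∀ i, (B i).IsAlt)
    (hfin : ∀ x y, HasFiniteSupport fun i => B i x y) : (finsum₂ B hfin).IsAlt := fun x =>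
  finsum_eq_zero_of_forall_eq_zero fun i => hB i x

end Finsum

section Intertwining

variable {R M N : Type*} [CommRing R] [AddCommGroup M] [AddCommGroup N] [Module R M]
  [Module R N]

theorem IsAlt.intertwines_of_basis {ι : Type*} [LinearOrder ι] (e : Basis ι R M)
    (f : M →ₗ[R] N) {B : M →ₗ[R] M →ₗ[R] M} {B' : N →ₗ[R] N →ₗ[R] N}
    (hB : B.IsAlt) (hB' : B'.IsAlt)
    (h : ∀ i j, i < j → f (B (e i) (e j)) = B' (f (e i)) (f (e j))) (x y : M) :
    f (B x y) = B' (f x) (f y) := by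
  suffices B.compr₂ f = B'.compl₁₂ f f from congr_fun₂ this x y
  refine ext_basis e e fun i j => ?_
  simp only [compr₂_apply, compl₁₂_apply]
  rcases lt_trichotomy i j with hij | rfl | hji
  · exact h i j hij
  · rw [hB, hB', map_zero]
  · rw [← hB.neg, ← hB'.neg, map_neg, h j i hji]

theorem jacobi_of_intertwines (f : M ≃ₗ[R] N) {B : M →ₗ[R] M →ₗ[R] M}
    {B' : N →ₗ[R] N →ₗ[R] N} (hf : ∀ x y, f (B x y) = B' (f x) (f y))
    (hB : ∀ x y z, B (B x y) z + B (B y z) x + B (B z x) y = 0) (x y z : N) :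
    B' (B' x y) z + B' (B' y z) x + B' (B' z x) y = 0 := by
  obtain ⟨x, rfl⟩ := f.surjective x
  obtain ⟨y, rfl⟩ := f.surjective y
  obtain ⟨z, rfl⟩ := f.surjective z
  simp only [← hf, ← map_add, hB, map_zero]

end Intertwining

end LinearMap

namespace Module.Basis

variable {ι R M : Type*} [CommRing R] [AddCommGroup M] [Module R M]

noncomputable def diagonalEquiv (e : Basis ι R M) (w : ι → Rˣ) : M ≃ₗ[R] M :=
  e.equiv (e.unitsSMul w) (Equiv.refl ι)

@[simp]
theorem diagonalEquiv_apply_basis (e : Basis ι R M) (w : ι → Rˣ) (i : ι) :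
    e.diagonalEquiv w (e i) = (w i : R) • e i := by
  simp [diagonalEquiv, unitsSMul_apply, Units.smul_def]

theorem diagonalEquiv_apply_of_mem_span (e : Basis ι R M) (w : ι → Rˣ) {i : ι} {v : M}
    (hv : v ∈ Submodule.span R {e i}) : e.diagonalEquiv w v = (w i : R) • v := by
  obtain ⟨c, rfl⟩ := Submodule.mem_span_singleton.mp hv
  rw [map_smul, diagonalEquiv_apply_basis, smul_comm]

end Module.Basis

section DeformedBracket

variable {R L : Type*} [CommRing R] [LieRing L] [LieAlgebra R L]

noncomputable def deformedBracket (Ψ : L →ₗ[R] L →ₗ[R] L) : L →ₗ[R] L →ₗ[R] L :=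
  (LieModule.toEnd R L L : L →ₗ[R] Module.End R L) + Ψ

theorem deformedBracket_apply (Ψ : L →ₗ[R] L →ₗ[R] L) (x y : L) :
    deformedBracket Ψ x y = ⁅x, y⁆ + Ψ x y :=
  rfl

theorem isAlt_deformedBracket {Ψ : L →ₗ[R] L →ₗ[R] L} (hΨ : Ψ.IsAlt) :
    (deformedBracket Ψ).IsAlt := fun x => by
  rw [deformedBracket_apply, lie_self, hΨ x, add_zero]

end DeformedBracket

section Scaling

variable {K g : Type*} [Field K]

theorem E_coe_s15 [AddCommGroup g] [Module K g] (e : Basis ℕ+ K g) (n : ℕ+) : E e n = e n :=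
  dif_pos n.pos

variable [LieRing g] [LieAlgebra K g] {α β : K}

noncomputable def scaledDeformation (Ψc : ℕ → g →ₗ[K] g →ₗ[K] g)
    (hfin : ∀ x y, HasFiniteSupport fun i => Ψc i x y) (α β : K) : g →ₗ[K] g →ₗ[K] g :=
  LinearMap.finsum₂ (fun i => (β * α ^ i) • Ψc i) fun x y => (hfin x y).fun_smul_right _

noncomputable def scalingEquiv (e : Basis ℕ+ K g) (hα : α ≠ 0) (hβ : β ≠ 0) : g ≃ₗ[K] g :=
  e.diagonalEquiv fun n =>
    if n = 1 then Units.mk0 α hα else (Units.mk0 β hβ)⁻¹ * Units.mk0 α hα ^ (n : ℕ)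

variable (e : Basis ℕ+ K g) (hα : α ≠ 0) (hβ : β ≠ 0)

theorem scalingEquiv_apply_one : scalingEquiv e hα hβ (e 1) = α • e 1 := by
  simp [scalingEquiv]

theorem scalingEquiv_apply_of_mem_span {n : ℕ+} (hn : 2 ≤ n) {v : g}
    (hv : v ∈ Submodule.span K {e n}) : scalingEquiv e hα hβ v = (β⁻¹ * α ^ (n : ℕ)) • v := by
  have hn1 : n ≠ 1 := by rintro rfl; exact absurd hn (by decide)
  simp [scalingEquiv, Basis.diagonalEquiv_apply_of_mem_span _ _ hv, hn1]

theorem scalingEquiv_apply_of_two_le {n : ℕ+} (hn : 2 ≤ n) :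
    scalingEquiv e hα hβ (e n) = (β⁻¹ * α ^ (n : ℕ)) • e n :=
  scalingEquiv_apply_of_mem_span e hα hβ hn (Submodule.mem_span_singleton_self _)

theorem scalingEquiv_intertwines_one (hm0a : ∀ i : ℕ+, 2 ≤ i → ⁅e 1, e i⁆ = e (i + 1))
    {Ψ Ψ' : g →ₗ[K] g →ₗ[K] g} (hΨ : ∀ x, Ψ (e 1) x = 0) (hΨ' : ∀ x, Ψ' (e 1) x = 0)
    {b : ℕ+} (hb : 2 ≤ b) :
    scalingEquiv e hα hβ (deformedBracket Ψ (e 1) (e b)) =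
      deformedBracket Ψ' (scalingEquiv e hα hβ (e 1)) (scalingEquiv e hα hβ (e b)) := by
  have hb1 : 2 ≤ b + 1 := hb.trans (PNat.lt_add_right b 1).le
  simp only [deformedBracket_apply, scalingEquiv_apply_one, scalingEquiv_apply_of_two_le e hα hβ hb,
    map_smul, LinearMap.smul_apply, hΨ, hΨ', add_zero, hm0a b hb,
    scalingEquiv_apply_of_two_le e hα hβ hb1, smul_smul, PNat.add_coe, PNat.one_coe]
  ring_nf

theorem scalingEquiv_intertwines_of_two_le
    (hm0b : ∀ i j : ℕ+, 2 ≤ i → 2 ≤ j → ⁅e i, e j⁆ = 0) (Ψc : ℕ → g →ₗ[K] g →ₗ[K] g)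
    (hwc : ∀ (i : ℕ) (a b : ℕ+), 2 ≤ a → 2 ≤ b →
      Ψc i (e a) (e b) ∈ Submodule.span K {E e ((a : ℕ) + (b : ℕ) + i)})
    (hfin : ∀ x y, HasFiniteSupport fun i => Ψc i x y) {a b : ℕ+} (ha : 2 ≤ a) (hb : 2 ≤ b) :
    scalingEquiv e hα hβ (deformedBracket (LinearMap.finsum₂ Ψc hfin) (e a) (e b)) =
      deformedBracket (scaledDeformation Ψc hfin α β)
        (scalingEquiv e hα hβ (e a)) (scalingEquiv e hα hβ (e b)) := by
  simp only [deformedBracket_apply, scalingEquiv_apply_of_two_le e hα hβ ha,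
    scalingEquiv_apply_of_two_le e hα hβ hb, hm0b a b ha hb, zero_add, map_smul,
    LinearMap.smul_apply, smul_smul, scaledDeformation, LinearMap.finsum₂_apply]
  rw [map_finsum _ (hfin _ _), smul_finsum' _ ((hfin _ _).fun_smul_right _)]
  refine finsum_congr fun i => ?_
  obtain ⟨n, hn⟩ : ∃ n : ℕ+, (n : ℕ) = a + b + i := ⟨⟨a + b + i, by positivity⟩, rfl⟩
  have hn2 : 2 ≤ n := ha.trans (by rw [← PNat.coe_le_coe, hn]; omega)
  have hspan := hwc i a b ha hb
  rw [← hn, E_coe_s15] at hspan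
  rw [scalingEquiv_apply_of_mem_span e hα hβ hn2 hspan, smul_smul, hn]
  congr 1
  field_simp
  ring

theorem scalingEquiv_intertwines (hm0a : ∀ i : ℕ+, 2 ≤ i → ⁅e 1, e i⁆ = e (i + 1))
    (hm0b : ∀ i j : ℕ+, 2 ≤ i → 2 ≤ j → ⁅e i, e j⁆ = 0) (Ψc : ℕ → g →ₗ[K] g →ₗ[K] g)
    (haltc : ∀ i, (Ψc i).IsAlt) (h1c : ∀ (i : ℕ) (x : g), Ψc i (e 1) x = 0)
    (hwc : ∀ (i : ℕ) (a b : ℕ+), 2 ≤ a → 2 ≤ b →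
      Ψc i (e a) (e b) ∈ Submodule.span K {E e ((a : ℕ) + (b : ℕ) + i)})
    (hfin : ∀ x y, HasFiniteSupport fun i => Ψc i x y) (x y : g) :
    scalingEquiv e hα hβ (deformedBracket (LinearMap.finsum₂ Ψc hfin) x y) =
      deformedBracket (scaledDeformation Ψc hfin α β)
        (scalingEquiv e hα hβ x) (scalingEquiv e hα hβ y) := by
  refine LinearMap.IsAlt.intertwines_of_basis e (scalingEquiv e hα hβ).toLinearMap
    (isAlt_deformedBracket (LinearMap.isAlt_finsum₂ haltc hfin))
    (isAlt_deformedBracket (LinearMap.isAlt_finsum₂ (fun i x => by simp [haltc i x]) _))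
    (fun a b hab => ?_) x y
  have hb : 2 ≤ b := Order.add_one_le_of_lt (one_lt_of_gt hab)
  rcases eq_or_ne a 1 with rfl | ha
  · exact scalingEquiv_intertwines_one e hα hβ hm0a
      (fun x => finsum_eq_zero_of_forall_eq_zero fun i => h1c i x)
      (fun x => finsum_eq_zero_of_forall_eq_zero fun i => by simp [h1c i x]) hb
  · exact scalingEquiv_intertwines_of_two_le e hα hβ hm0b Ψc hwc hfin
      (Order.add_one_le_of_lt (one_lt_iff_ne_one.mpr ha)) hb

end Scaling

theorem scaled_deformation_isomorphic_general (K g : Type*) [Field K]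
    [LieRing g] [LieAlgebra K g]
    (e : Module.Basis ℕ+ K g)
    (hm0a : ∀ i : ℕ+, 2 ≤ i → ⁅e 1, e i⁆ = e (i + 1))
    (hm0b : ∀ i j : ℕ+, 2 ≤ i → 2 ≤ j → ⁅e i, e j⁆ = 0)
    (Ψc : ℕ → (g →ₗ[K] g →ₗ[K] g))
    (haltc : ∀ (i : ℕ) (x : g), Ψc i x x = 0)
    (h1c : ∀ (i : ℕ) (x : g), Ψc i (e 1) x = 0)
    (hwc : ∀ (i : ℕ) (a b : ℕ+), 2 ≤ a → 2 ≤ b →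
      Ψc i (e a) (e b) ∈ Submodule.span K {E e ((a : ℕ) + (b : ℕ) + i)})
    (hfin : ∀ x y : g, (Function.support fun i : ℕ => Ψc i x y).Finite)
    (Ψ : g →ₗ[K] g →ₗ[K] g)
    (hΨ : ∀ x y : g, Ψ x y = ∑ᶠ i : ℕ, Ψc i x y)
    (hJac : ∀ x y z : g,
      (⁅⁅x, y⁆ + Ψ x y, z⁆ + Ψ (⁅x, y⁆ + Ψ x y) z) +
      (⁅⁅y, z⁆ + Ψ y z, x⁆ + Ψ (⁅y, z⁆ + Ψ y z) x) +
      (⁅⁅z, x⁆ + Ψ z x, y⁆ + Ψ (⁅z, x⁆ + Ψ z x) y) = 0)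
    (α β : K) (hα : α ≠ 0) (hβ : β ≠ 0) :
    ∃ Ψt : g →ₗ[K] g →ₗ[K] g,
      (∀ x y : g, Ψt x y = ∑ᶠ i : ℕ, (β * α ^ i) • Ψc i x y) ∧
      (∀ x y z : g,
        (⁅⁅x, y⁆ + Ψt x y, z⁆ + Ψt (⁅x, y⁆ + Ψt x y) z) +
        (⁅⁅y, z⁆ + Ψt y z, x⁆ + Ψt (⁅y, z⁆ + Ψt y z) x) +
        (⁅⁅z, x⁆ + Ψt z x, y⁆ + Ψt (⁅z, x⁆ + Ψt z x) y) = 0) ∧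
      (∃ f : g ≃ₗ[K] g, ∀ x y : g,
        f (⁅x, y⁆ + Ψ x y) = ⁅f x, f y⁆ + Ψt (f x) (f y)) := by
  obtain rfl : Ψ = LinearMap.finsum₂ Ψc hfin := LinearMap.ext₂ hΨ
  have key := scalingEquiv_intertwines e hα hβ hm0a hm0b Ψc haltc h1c hwc hfin
  exact ⟨scaledDeformation Ψc hfin α β, fun _ _ => rfl, LinearMap.jacobi_of_intertwines _ key hJac,
    scalingEquiv e hα hβ, key⟩

/-- **Proposition isom_lemma.** Let `K` be a field of characteristic 0 and
let `g` carry the Lie algebra structure of `m0` (basis `e 1, e 2, …`, only nonzero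
brackets `⁅e 1, e i⁆ = e (i+1)` for `i ≥ 2`).  Let `Ψ = Ψ_0 + Ψ_1 + Ψ_2 + …` be an
adapted deformation of `m0`: each homogeneous component `Ψ_i` is an alternating bilinear
map with `Ψ_i(e 1, ·) = 0` and `Ψ_i(e_a, e_b) ∈ span {e_{a+b+i}}` for `a, b ≥ 2`, and the
bracket `[x,y]_Ψ = ⁅x,y⁆ + Ψ(x,y)` satisfies the Jacobi identity.  Then for any nonzero
`α, β ∈ K` the map `Ψ̃ = β Ψ_0 + βα Ψ_1 + βα² Ψ_2 + …` is again a deformation (the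
bracket `[x,y]_{Ψ̃} = ⁅x,y⁆ + Ψ̃(x,y)` satisfies the Jacobi identity), and the Lie
algebras `(g, [,]_Ψ)` and `(g, [,]_{Ψ̃})` are isomorphic. -/
theorem scaled_deformation_isomorphic (K g : Type*) [Field K] [CharZero K]
    [LieRing g] [LieAlgebra K g]
    (e : Module.Basis ℕ+ K g)
    (hm0a : ∀ i : ℕ+, 2 ≤ i → ⁅e 1, e i⁆ = e (i + 1))
    (hm0b : ∀ i j : ℕ+, 2 ≤ i → 2 ≤ j → ⁅e i, e j⁆ = 0)
    (Ψc : ℕ → (g →ₗ[K] g →ₗ[K] g))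
    (haltc : ∀ (i : ℕ) (x : g), Ψc i x x = 0)
    (h1c : ∀ (i : ℕ) (x : g), Ψc i (e 1) x = 0)
    (hwc : ∀ (i : ℕ) (a b : ℕ+), 2 ≤ a → 2 ≤ b →
      Ψc i (e a) (e b) ∈ Submodule.span K {E e ((a : ℕ) + (b : ℕ) + i)})
    (hfin : ∀ x y : g, (Function.support fun i : ℕ => Ψc i x y).Finite)
    (Ψ : g →ₗ[K] g →ₗ[K] g)
    (hΨ : ∀ x y : g, Ψ x y = ∑ᶠ i : ℕ, Ψc i x y)
    (hJac : ∀ x y z : g,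
      (⁅⁅x, y⁆ + Ψ x y, z⁆ + Ψ (⁅x, y⁆ + Ψ x y) z) +
      (⁅⁅y, z⁆ + Ψ y z, x⁆ + Ψ (⁅y, z⁆ + Ψ y z) x) +
      (⁅⁅z, x⁆ + Ψ z x, y⁆ + Ψ (⁅z, x⁆ + Ψ z x) y) = 0)
    (α β : K) (hα : α ≠ 0) (hβ : β ≠ 0) :
    ∃ Ψt : g →ₗ[K] g →ₗ[K] g,
      (∀ x y : g, Ψt x y = ∑ᶠ i : ℕ, (β * α ^ i) • Ψc i x y) ∧
      (∀ x y z : g,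
        (⁅⁅x, y⁆ + Ψt x y, z⁆ + Ψt (⁅x, y⁆ + Ψt x y) z) +
        (⁅⁅y, z⁆ + Ψt y z, x⁆ + Ψt (⁅y, z⁆ + Ψt y z) x) +
        (⁅⁅z, x⁆ + Ψt z x, y⁆ + Ψt (⁅z, x⁆ + Ψt z x) y) = 0) ∧
      (∃ f : g ≃ₗ[K] g, ∀ x y : g,
        f (⁅x, y⁆ + Ψ x y) = ⁅f x, f y⁆ + Ψt (f x) (f y)) :=
  scaled_deformation_isomorphic_general K g e hm0a hm0b Ψc haltc h1c hwc hfin Ψ hΨ hJac α β hα hβ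
end
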